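/- For every α > 1/3, the integrals I(ε) = ∫_{0<|w₀|<1, 0<|w₁|<1} ( |w₀|⁶ / ((1+|w₀|²+|w₁|²)(1+|w₀|²)(|w₀|²+|w₁|²)) + ε )^{−α} · (1+|w₀|²+|w₁|²)^{−2} · (|w₀|²+|w₁|²)^{−1} dλ (Lebesgue measure λ on ℂ²) tend to +∞ as ε → 0⁺; that is, lim_{ε→0⁺} I(ε) = +∞. -/

import Mathlib

open MeasureTheory

/-- `I(ε)`: the integral of the `ε`-regularized test potential density on the
patch near the blown-up point. -/
noncomputable def Ifun (α ε : ℝ) : ENNReal :=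
  ∫⁻ w in {w : ℂ × ℂ | 0 < ‖w.1‖ ∧ ‖w.1‖ < 1 ∧
      0 < ‖w.2‖ ∧ ‖w.2‖ < 1},
    ENNReal.ofReal
      ((‖w.1‖ ^ 6 /
            ((1 + ‖w.1‖ ^ 2 + ‖w.2‖ ^ 2) *
              (1 + ‖w.1‖ ^ 2) *
              (‖w.1‖ ^ 2 + ‖w.2‖ ^ 2)) + ε) ^ (-α) *
        (1 + ‖w.1‖ ^ 2 + ‖w.2‖ ^ 2) ^ (-(2 : ℝ)) *
        (‖w.1‖ ^ 2 + ‖w.2‖ ^ 2) ^ (-(1 : ℝ)))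

/-!
Take `r = ε ^ (1/6)` and the product of discs `B(r/2, r/2) × B(3/4, 1/4)` inside the patch.
There `|w₀| < r` and `1/2 < |w₁| < 1`, so the first summand `|w₀|⁶/(…)` is at most `4 r⁶ = 4ε`
and the other two factors are bounded below: the integrand is at least `(5ε)^(-α)/18`.
The discs have volume `≍ r² = ε^(1/3)`, hence `I(ε) ≳ ε^(1/3 - α) → ∞` when `α > 1/3`.
-/

open Real Metric Filter Topology

noncomputable def patchDensity (α ε a b : ℝ) : ℝ :=
  (a ^ 6 / ((1 + a ^ 2 + b ^ 2) * (1 + a ^ 2) * (a ^ 2 + b ^ 2)) + ε) ^ (-α) *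
    (1 + a ^ 2 + b ^ 2) ^ (-(2 : ℝ)) * (a ^ 2 + b ^ 2) ^ (-(1 : ℝ))

lemma le_patchDensity {α ε a b : ℝ} (hα : 0 ≤ α) (hε : 0 < ε) (ha : 0 ≤ a) (ha₁ : a ≤ 1)
    (haε : a ^ 6 ≤ ε) (hb : 1 / 2 ≤ b) (hb₁ : b ≤ 1) :
    (5 * ε) ^ (-α) / 18 ≤ patchDensity α ε a b := by
  have hs : 1 / 4 ≤ a ^ 2 + b ^ 2 := by nlinarith
  have hs₂ : a ^ 2 + b ^ 2 ≤ 2 := by nlinarith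
  have hfrac : a ^ 6 / ((1 + a ^ 2 + b ^ 2) * (1 + a ^ 2) * (a ^ 2 + b ^ 2)) ≤ 4 * ε := by
    have hden : 1 / 4 ≤ (1 + a ^ 2 + b ^ 2) * (1 + a ^ 2) * (a ^ 2 + b ^ 2) :=
      calc (1 / 4 : ℝ) = 1 * 1 * (1 / 4) := by norm_num
        _ ≤ _ := by gcongr <;> nlinarith
    rw [div_le_iff₀ (by positivity)]
    nlinarith
  rw [patchDensity, Real.rpow_neg_one, Real.rpow_neg (x := 1 + a ^ 2 + b ^ 2) (by positivity),
    Real.rpow_two, mul_assoc, ← mul_inv, ← div_eq_mul_inv]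
  apply div_le_div₀ (by positivity) _ (by positivity)
    (calc _ ≤ (1 + 2 : ℝ) ^ 2 * 2 := by rw [add_assoc]; gcongr
      _ = 18 := by norm_num)
  exact Real.rpow_le_rpow_of_nonpos (by positivity) (by linarith) (by linarith)

lemma norm_sub_lt_norm_of_mem_ball {E : Type*} [SeminormedAddCommGroup E] {c z : E} {s : ℝ}
    (h : z ∈ ball c s) : ‖c‖ - s < ‖z‖ := by
  have := norm_sub_norm_le c z
  rw [mem_ball_iff_norm'] at h
  linarith

lemma Complex.volume_ball_eq_ofReal (a : ℂ) {r : ℝ} (hr : 0 ≤ r) :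
    volume (ball a r) = ENNReal.ofReal (π * r ^ 2) := by
  rw [Complex.volume_ball, ENNReal.ofReal_mul pi_nonneg, ← NNReal.coe_real_pi,
    ENNReal.ofReal_coe_nnreal, ENNReal.ofReal_pow hr, mul_comm]

lemma ofReal_mul_volume_le_Ifun {α ε r : ℝ} (hα : 0 ≤ α) (hr : 0 < r) (hr₁ : r ≤ 1)
    (hrε : r ^ 6 ≤ ε) :
    ENNReal.ofReal ((5 * ε) ^ (-α) / 18) *
      volume (ball ((r / 2 : ℝ) : ℂ) (r / 2) ×ˢ ball (3 / 4 : ℂ) (1 / 4)) ≤ Ifun α ε := by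
  have hε : 0 < ε := (pow_pos hr 6).trans_le hrε
  set R := ball ((r / 2 : ℝ) : ℂ) (r / 2) ×ˢ ball (3 / 4 : ℂ) (1 / 4)
  have hR : ∀ w ∈ R, 0 < ‖w.1‖ ∧ ‖w.1‖ < r ∧ 1 / 2 < ‖w.2‖ ∧ ‖w.2‖ < 1 := by
    rintro ⟨z₁, z₂⟩ ⟨h₁, h₂⟩
    have hc₁ : ‖((r / 2 : ℝ) : ℂ)‖ = r / 2 := Complex.norm_of_nonneg (by positivity)
    have hc₂ : ‖(3 / 4 : ℂ)‖ = 3 / 4 := by norm_num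
    have := hc₁ ▸ norm_sub_lt_norm_of_mem_ball h₁
    have := hc₁ ▸ norm_lt_of_mem_ball h₁
    have := hc₂ ▸ norm_sub_lt_norm_of_mem_ball h₂
    have := hc₂ ▸ norm_lt_of_mem_ball h₂
    refine ⟨?_, ?_, ?_, ?_⟩ <;> linarith
  calc ENNReal.ofReal ((5 * ε) ^ (-α) / 18) * volume R
      = ∫⁻ _ in R, ENNReal.ofReal ((5 * ε) ^ (-α) / 18) := (setLIntegral_const _ _).symm
    _ ≤ ∫⁻ w in R, ENNReal.ofReal (patchDensity α ε ‖w.1‖ ‖w.2‖) := by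
      refine setLIntegral_mono' (measurableSet_ball.prod measurableSet_ball) fun w hw => ?_
      obtain ⟨-, h₁, h₂, h₂'⟩ := hR w hw
      refine ENNReal.ofReal_le_ofReal (le_patchDensity hα hε (norm_nonneg _) ?_ ?_ ?_ ?_)
      all_goals first
        | linarith
        | exact (pow_le_pow_left₀ (norm_nonneg _) h₁.le 6).trans hrε
    _ ≤ Ifun α ε := lintegral_mono_set fun w hw => by
      obtain ⟨h₀, h₁, h₂, h₂'⟩ := hR w hw
      exact ⟨h₀, by linarith, by linarith, h₂'⟩

lemma exists_pos_mul_rpow_le_Ifun {α : ℝ} (hα : 0 ≤ α) :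
    ∃ C > 0, ∀ ε ∈ Set.Ioc (0 : ℝ) 1, ENNReal.ofReal (C * ε ^ (1 / 3 - α)) ≤ Ifun α ε := by
  refine ⟨5 ^ (-α) * π ^ 2 / 1152, by positivity, fun ε ⟨hε, hε₁⟩ => ?_⟩
  set r := ε ^ (1 / 6 : ℝ)
  have hr_pow (n : ℕ) : r ^ n = ε ^ (n / 6 : ℝ) := by
    rw [← Real.rpow_natCast, ← Real.rpow_mul hε.le]
    ring_nf
  have hbound : 5 ^ (-α) * π ^ 2 / 1152 * ε ^ (1 / 3 - α) =
      (5 * ε) ^ (-α) / 18 * (π * (r / 2) ^ 2 * (π * (1 / 4) ^ 2)) := by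
    rw [div_pow, hr_pow, Real.mul_rpow (by norm_num) hε.le, sub_eq_neg_add,
      Real.rpow_add hε]
    norm_num
    ring
  calc ENNReal.ofReal (5 ^ (-α) * π ^ 2 / 1152 * ε ^ (1 / 3 - α))
      = ENNReal.ofReal ((5 * ε) ^ (-α) / 18) *
          volume (ball ((r / 2 : ℝ) : ℂ) (r / 2) ×ˢ ball (3 / 4 : ℂ) (1 / 4)) := by
        rw [Measure.volume_eq_prod, Measure.prod_prod,
          Complex.volume_ball_eq_ofReal _ (by positivity),
          Complex.volume_ball_eq_ofReal _ (by norm_num), ← ENNReal.ofReal_mul (by positivity),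
          ← ENNReal.ofReal_mul (by positivity), hbound]
    _ ≤ Ifun α ε := ofReal_mul_volume_le_Ifun hα (by positivity)
        (Real.rpow_le_one hε.le hε₁ (by norm_num)) (by rw [hr_pow]; norm_num)

lemma tendsto_ofReal_mul_rpow_nhdsGT_zero {C s : ℝ} (hC : 0 < C) (hs : s < 0) :
    Tendsto (fun ε : ℝ => ENNReal.ofReal (C * ε ^ s)) (𝓝[>] 0) (𝓝 ⊤) :=
  ENNReal.tendsto_ofReal_atTop.comp ((tendsto_rpow_neg_nhdsGT_zero hs).const_mul_atTop hC)

theorem tendsto_Ifun_top (α : ℝ) (hα : 1 / 3 < α) :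
    Filter.Tendsto (fun ε : ℝ => Ifun α ε) (nhdsWithin 0 (Set.Ioi 0))
      (nhds ⊤) := by
  obtain ⟨C, hC, hle⟩ := exists_pos_mul_rpow_le_Ifun (by linarith : 0 ≤ α)
  have hs : 1 / 3 - α < 0 := by linarith
  refine tendsto_nhds_top_mono (tendsto_ofReal_mul_rpow_nhdsGT_zero hC hs) ?_
  filter_upwards [Ioc_mem_nhdsGT zero_lt_one] using hle
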